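/- arXiv:1810.00615 — 4 statements merged into one kernel-verified Lean document; each statement's English description precedes it below -/
import Mathlib

section
/- The block circulant preconditioner 𝒫 = I_ℓ ⊗ A_0 + Σ ⊗ A_1 ∈ ℂ^{nℓ×nℓ} is invertible if and only if A_0 + ω^{−j} A_1 is invertible for every j ∈ {0,…,ℓ−1}; in that case 𝒫⁻¹ = (U ⊗ I_n) · D · (Uᴴ ⊗ I_n), where D is the block diagonal matrix whose j-th diagonal block is (A_0 + ω^{−j} A_1)⁻¹. -/
/-!
The normalized DFT matrix `U` is unitary and diagonalizes the cyclic downshift,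
`U * diagonal (ω⁻ᵐ) * Uᴴ = Σ`; both identities come from the orthogonality relation
`∑ₘ ω^(m s) = ℓ · [ℓ ∣ s]`. Conjugating by `U ⊗ Iₙ` therefore turns `𝒫` into the block diagonal
matrix with blocks `A₀ + ω⁻ʲ A₁`, whose invertibility and inverse are read off block by block.
-/

open Complex Matrix Kronecker

theorem IsPrimitiveRoot.sum_zpow_mul {K : Type*} [Field K] {ζ : K} {ℓ : ℕ}
    (hζ : IsPrimitiveRoot ζ ℓ) (s : ℤ) :
    ∑ m : Fin ℓ, ζ ^ ((m : ℤ) * s) = if (ℓ : ℤ) ∣ s then (ℓ : K) else 0 := by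
  have hpow : ∀ m : Fin ℓ, ζ ^ ((m : ℤ) * s) = (ζ ^ s) ^ (m : ℕ) := fun m => by
    rw [mul_comm, _root_.zpow_mul, zpow_natCast]
  simp only [hpow, Fin.sum_univ_eq_sum_range (fun m => (ζ ^ s) ^ m)]
  split_ifs with hs
  · simp [(hζ.zpow_eq_one_iff_dvd s).mpr hs]
  · have hζs : (ζ ^ s) ^ ℓ = 1 := by
      rw [← zpow_natCast, ← _root_.zpow_mul, mul_comm, _root_.zpow_mul, zpow_natCast,
        hζ.pow_eq_one, _root_.one_zpow]
    rw [geom_sum_eq (mt (hζ.zpow_eq_one_iff_dvd s).mp hs), hζs, sub_self, zero_div]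

theorem Fin.val_eq_add_mod_iff_dvd {ℓ : ℕ} (j k : Fin ℓ) (c : ℕ) :
    (j : ℕ) = (k + c) % ℓ ↔ (ℓ : ℤ) ∣ j - k - c := by
  conv_lhs => rw [← Nat.mod_eq_of_lt j.isLt, eq_comm]
  change (k + c : ℕ) ≡ j [MOD ℓ] ↔ _
  rw [Nat.modEq_iff_dvd]
  push_cast
  rw [sub_add_eq_sub_sub]

noncomputable def dftMatrix (ω : ℂ) (ℓ : ℕ) : Matrix (Fin ℓ) (Fin ℓ) ℂ :=
  of fun j k => ω ^ ((j : ℕ) * (k : ℕ)) / Real.sqrt ℓ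

theorem dftMatrix_mul_diagonal_mul_conjTranspose {ω : ℂ} {ℓ : ℕ} (hω : IsPrimitiveRoot ω ℓ)
    (c : ℕ) :
    dftMatrix ω ℓ * diagonal (fun m : Fin ℓ => ω ^ (-((m : ℤ) * c))) * (dftMatrix ω ℓ)ᴴ =
      of fun j k : Fin ℓ => if (j : ℕ) = (k + c) % ℓ then 1 else 0 := by
  ext j k
  have hℓ : ℓ ≠ 0 := j.pos.ne'
  have hω0 : ω ≠ 0 := hω.ne_zero hℓ
  have hconj : (starRingEnd ℂ) ω = ω⁻¹ := (Complex.inv_eq_conj (hω.norm'_eq_one hℓ)).symm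
  have hsqrt : (Real.sqrt ℓ : ℂ) * Real.sqrt ℓ = ℓ := by
    rw [← ofReal_mul, Real.mul_self_sqrt ℓ.cast_nonneg, ofReal_natCast]
  have hterm : ∀ m : Fin ℓ, dftMatrix ω ℓ j m * ω ^ (-((m : ℤ) * c)) *
      (starRingEnd ℂ) (dftMatrix ω ℓ k m) = ω ^ ((m : ℤ) * (j - k - c)) * (ℓ : ℂ)⁻¹ := fun m => by
    calc _ = ω ^ ((j : ℕ) * (m : ℕ)) * ω ^ (-((m : ℤ) * c)) * ω⁻¹ ^ ((k : ℕ) * (m : ℕ)) /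
          ((Real.sqrt ℓ : ℂ) * Real.sqrt ℓ) := by
          simp only [dftMatrix, of_apply, map_div₀, map_pow, hconj, conj_ofReal]
          ring
      _ = _ := by
          rw [hsqrt, div_eq_mul_inv, ← zpow_natCast, ← zpow_natCast, _root_.inv_zpow',
            ← zpow_add₀ hω0, ← zpow_add₀ hω0]
          congr 2
          push_cast
          ring
  rw [mul_apply]
  simp only [mul_diagonal, conjTranspose_apply, RCLike.star_def, hterm]
  rw [← Finset.sum_mul, hω.sum_zpow_mul, of_apply]
  simp only [Fin.val_eq_add_mod_iff_dvd]
  split_ifs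
  · exact mul_inv_cancel₀ (Nat.cast_ne_zero.mpr hℓ)
  · exact zero_mul _

theorem dftMatrix_mul_conjTranspose {ω : ℂ} {ℓ : ℕ} (hω : IsPrimitiveRoot ω ℓ) :
    dftMatrix ω ℓ * (dftMatrix ω ℓ)ᴴ = 1 := by
  have h := dftMatrix_mul_diagonal_mul_conjTranspose hω 0
  simp only [CharP.cast_eq_zero, mul_zero, neg_zero, zpow_zero, diagonal_one, Matrix.mul_one,
    add_zero] at h
  rw [h]
  ext j k
  simp [one_apply, Nat.mod_eq_of_lt k.isLt, Fin.val_inj]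

namespace Matrix

variable {ι n R : Type*} [DecidableEq ι]

/-- `blockDiagonal` with the block index as the first coordinate, matching `1 ⊗ₖ A`. -/
def kroneckerBlockDiagonal [Zero R] (M : ι → Matrix n n R) : Matrix (ι × n) (ι × n) R :=
  (blockDiagonal M).submatrix (Equiv.prodComm ι n) (Equiv.prodComm ι n)

theorem kroneckerBlockDiagonal_apply [Zero R] (M : ι → Matrix n n R) (p q : ι × n) :
    kroneckerBlockDiagonal M p q = if p.1 = q.1 then M p.1 p.2 q.2 else 0 := by
  simp [kroneckerBlockDiagonal, blockDiagonal_apply]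

theorem one_kronecker_add_diagonal_kronecker [Semiring R] (A B : Matrix n n R) (d : ι → R) :
    (1 : Matrix ι ι R) ⊗ₖ A + diagonal d ⊗ₖ B = kroneckerBlockDiagonal fun j => A + d j • B := by
  ext ⟨i, a⟩ ⟨j, b⟩
  rw [kroneckerBlockDiagonal_apply]
  by_cases hij : i = j <;> simp [hij]

variable [Fintype ι] [Fintype n] [DecidableEq n] [CommRing R]

theorem isUnit_blockDiagonal_iff {M : ι → Matrix n n R} :
    IsUnit (blockDiagonal M) ↔ ∀ j, IsUnit (M j) := by
  simp only [isUnit_iff_isUnit_det, det_blockDiagonal, IsUnit.prod_univ_iff]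

theorem inv_blockDiagonal {M : ι → Matrix n n R} (hM : ∀ j, IsUnit (M j)) :
    (blockDiagonal M)⁻¹ = blockDiagonal fun j => (M j)⁻¹ := by
  refine inv_eq_right_inv ?_
  rw [← blockDiagonal_mul, ← blockDiagonal_one]
  congr 1
  funext j
  exact mul_nonsing_inv _ ((isUnit_iff_isUnit_det _).mp (hM j))

theorem isUnit_kroneckerBlockDiagonal_iff {M : ι → Matrix n n R} :
    IsUnit (kroneckerBlockDiagonal M) ↔ ∀ j, IsUnit (M j) := by
  rw [kroneckerBlockDiagonal, isUnit_submatrix_equiv, isUnit_blockDiagonal_iff]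

theorem inv_kroneckerBlockDiagonal {M : ι → Matrix n n R} (hM : ∀ j, IsUnit (M j)) :
    (kroneckerBlockDiagonal M)⁻¹ = kroneckerBlockDiagonal fun j => (M j)⁻¹ := by
  rw [kroneckerBlockDiagonal, inv_submatrix_equiv, inv_blockDiagonal hM, kroneckerBlockDiagonal]

theorem isUnit_mul_mul_iff_of_mul_eq_one {V W : Matrix n n R} (h : V * W = 1) (M : Matrix n n R) :
    IsUnit (V * M * W) ↔ IsUnit M := by
  rw [isUnit_iff_isUnit_det, isUnit_iff_isUnit_det, det_mul, det_mul, mul_right_comm, ← det_mul, h,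
    det_one, one_mul]

theorem inv_mul_mul_of_mul_eq_one {V W : Matrix n n R} (h : V * W = 1) (M : Matrix n n R) :
    (V * M * W)⁻¹ = V * M⁻¹ * W := by
  rw [mul_inv_rev, mul_inv_rev, inv_eq_left_inv h, inv_eq_left_inv (mul_eq_one_comm.mp h),
    Matrix.mul_assoc]

end Matrix

theorem block_circulant_preconditioner_inverse_general
    (ℓ n : ℕ) (hℓ : 1 ≤ ℓ)
    (ω : ℂ) (hω : ω = Complex.exp (2 * Real.pi * Complex.I / ℓ))
    (A₀ A₁ : Matrix (Fin n) (Fin n) ℂ)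
    (Sigma : Matrix (Fin ℓ) (Fin ℓ) ℂ)
    (hSigma : ∀ j k : Fin ℓ, Sigma j k = if (j : ℕ) = ((k : ℕ) + 1) % ℓ then 1 else 0)
    (U : Matrix (Fin ℓ) (Fin ℓ) ℂ)
    (hU : ∀ j k : Fin ℓ, U j k = ω ^ ((j : ℕ) * (k : ℕ)) / Real.sqrt ℓ)
    (P : Matrix (Fin ℓ × Fin n) (Fin ℓ × Fin n) ℂ)
    (hP : P = (1 : Matrix (Fin ℓ) (Fin ℓ) ℂ) ⊗ₖ A₀ + Sigma ⊗ₖ A₁)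
    (D : Matrix (Fin ℓ × Fin n) (Fin ℓ × Fin n) ℂ)
    (hD : ∀ p q : Fin ℓ × Fin n,
      D p q = if p.1 = q.1 then (A₀ + ω ^ (-(p.1 : ℤ)) • A₁)⁻¹ p.2 q.2 else 0) :
    (IsUnit P ↔ ∀ j : Fin ℓ, IsUnit (A₀ + ω ^ (-(j : ℤ)) • A₁)) ∧
    ((∀ j : Fin ℓ, IsUnit (A₀ + ω ^ (-(j : ℤ)) • A₁)) →
      P⁻¹ = (U ⊗ₖ (1 : Matrix (Fin n) (Fin n) ℂ)) * D *
        (Uᴴ ⊗ₖ (1 : Matrix (Fin n) (Fin n) ℂ))) := by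
  have hprim : IsPrimitiveRoot ω ℓ := hω ▸ Complex.isPrimitiveRoot_exp ℓ (by omega)
  have hUdft : U = dftMatrix ω ℓ := ext hU
  have hUU : U * Uᴴ = 1 := hUdft ▸ dftMatrix_mul_conjTranspose hprim
  have hUΛU : U * diagonal (fun m : Fin ℓ => ω ^ (-(m : ℤ))) * Uᴴ = Sigma := by
    simpa [hUdft, ← ext_iff, hSigma] using dftMatrix_mul_diagonal_mul_conjTranspose hprim 1
  set B := fun j : Fin ℓ => A₀ + ω ^ (-(j : ℤ)) • A₁
  have hVW : (U ⊗ₖ (1 : Matrix (Fin n) (Fin n) ℂ)) * (Uᴴ ⊗ₖ 1) = 1 := by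
    rw [← mul_kronecker_mul, hUU, Matrix.one_mul, one_kronecker_one]
  have hPB : P = (U ⊗ₖ 1) * kroneckerBlockDiagonal B * (Uᴴ ⊗ₖ 1) := by
    calc P = (U * Uᴴ) ⊗ₖ A₀ + (U * diagonal (fun m : Fin ℓ => ω ^ (-(m : ℤ))) * Uᴴ) ⊗ₖ A₁ := by
          rw [hP, hUU, hUΛU]
      _ = (U ⊗ₖ 1) * (1 ⊗ₖ A₀ + diagonal (fun m : Fin ℓ => ω ^ (-(m : ℤ))) ⊗ₖ A₁) * (Uᴴ ⊗ₖ 1) := by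
          simp only [Matrix.mul_add, Matrix.add_mul, ← mul_kronecker_mul, Matrix.mul_one,
            Matrix.one_mul]
      _ = _ := by rw [one_kronecker_add_diagonal_kronecker]
  have hDB : D = kroneckerBlockDiagonal fun j => (B j)⁻¹ := by
    ext p q
    rw [hD, kroneckerBlockDiagonal_apply]
  rw [hPB, isUnit_mul_mul_iff_of_mul_eq_one hVW, isUnit_kroneckerBlockDiagonal_iff]
  refine ⟨Iff.rfl, fun hB => ?_⟩
  rw [inv_mul_mul_of_mul_eq_one hVW, inv_kroneckerBlockDiagonal hB, hDB]

/-- The block circulant preconditioner `𝒫 = Iₗ ⊗ A₀ + Σ ⊗ A₁` is invertible iff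
`A₀ + ω^(-j) • A₁` is invertible for every `j`; in that case
`𝒫⁻¹ = (U ⊗ Iₙ) * D * (Uᴴ ⊗ Iₙ)` where `D` is block diagonal with `j`-th block
`(A₀ + ω^(-j) • A₁)⁻¹`. -/
theorem block_circulant_preconditioner_inverse
    (ℓ n : ℕ) (hℓ : 1 ≤ ℓ) (hn : 1 ≤ n)
    (ω : ℂ) (hω : ω = Complex.exp (2 * Real.pi * Complex.I / ℓ))
    (A₀ A₁ : Matrix (Fin n) (Fin n) ℂ)
    (Sigma : Matrix (Fin ℓ) (Fin ℓ) ℂ)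
    (hSigma : ∀ j k : Fin ℓ, Sigma j k = if (j : ℕ) = ((k : ℕ) + 1) % ℓ then 1 else 0)
    (U : Matrix (Fin ℓ) (Fin ℓ) ℂ)
    (hU : ∀ j k : Fin ℓ, U j k = ω ^ ((j : ℕ) * (k : ℕ)) / Real.sqrt ℓ)
    (P : Matrix (Fin ℓ × Fin n) (Fin ℓ × Fin n) ℂ)
    (hP : P = (1 : Matrix (Fin ℓ) (Fin ℓ) ℂ) ⊗ₖ A₀ + Sigma ⊗ₖ A₁)
    (D : Matrix (Fin ℓ × Fin n) (Fin ℓ × Fin n) ℂ)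
    (hD : ∀ p q : Fin ℓ × Fin n,
      D p q = if p.1 = q.1 then (A₀ + ω ^ (-(p.1 : ℤ)) • A₁)⁻¹ p.2 q.2 else 0) :
    (IsUnit P ↔ ∀ j : Fin ℓ, IsUnit (A₀ + ω ^ (-(j : ℤ)) • A₁)) ∧
    ((∀ j : Fin ℓ, IsUnit (A₀ + ω ^ (-(j : ℤ)) • A₁)) →
      P⁻¹ = (U ⊗ₖ (1 : Matrix (Fin n) (Fin n) ℂ)) * D *
        (Uᴴ ⊗ₖ (1 : Matrix (Fin n) (Fin n) ℂ))) :=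
  block_circulant_preconditioner_inverse_general ℓ n hℓ ω hω A₀ A₁ Sigma hSigma U hU P hP D hD
end

section
/- If the block circulant preconditioner 𝒫 is invertible, then the preconditioned matrix is a rank-at-most-n perturbation of the identity: rank(𝒫⁻¹ · 𝒜 − I_{nℓ}) ≤ n. -/
/-!
The nilpotent and the cyclic downshift differ only in the wrap-around entry `(0, ℓ - 1)`, so
`𝒜 - 𝒫 = (N - Σ) ⊗ A₁` with `N - Σ = -e₀ e_{ℓ-1}ᵀ` of rank one. Such a Kronecker product factors
through `ℂⁿ`, hence has rank at most `n`, and `𝒫⁻¹ 𝒜 - I = 𝒫⁻¹ (𝒜 - 𝒫)`.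
-/

open Complex Matrix Kronecker

namespace Matrix

theorem sub_kronecker {l m n p R : Type*} [NonUnitalNonAssocRing R] (A₁ A₂ : Matrix l m R)
    (B : Matrix n p R) : (A₁ - A₂) ⊗ₖ B = A₁ ⊗ₖ B - A₂ ⊗ₖ B := by
  ext
  simp [sub_mul]

theorem rank_vecMulVec_kronecker_le {l m n p R : Type*} [Fintype m] [Fintype n] [Fintype p]
    [DecidableEq n] [CommSemiring R] [StrongRankCondition R]
    (u : l → R) (v : m → R) (A : Matrix n p R) :
    (vecMulVec u v ⊗ₖ A).rank ≤ Fintype.card n := by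
  rw [vecMulVec_eq Unit, ← Matrix.one_mul A, mul_kronecker_mul]
  calc _ ≤ (replicateCol Unit u ⊗ₖ (1 : Matrix n n R)).rank := rank_mul_le_left _ _
    _ ≤ Fintype.card (Unit × n) := rank_le_card_width _
    _ = Fintype.card n := by simp

theorem rank_inv_mul_sub_one_le {n R : Type*} [Fintype n] [DecidableEq n] [CommRing R]
    [StrongRankCondition R] (P A : Matrix n n R) (hP : IsUnit P) :
    (P⁻¹ * A - 1).rank ≤ (A - P).rank := by
  rw [← nonsing_inv_mul P ((isUnit_iff_isUnit_det P).mp hP), ← Matrix.mul_sub]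
  exact rank_mul_le_right _ _

variable {R : Type*} [Ring R]

def downShift (ℓ : ℕ) : Matrix (Fin ℓ) (Fin ℓ) R :=
  of fun j k => if (j : ℕ) = k + 1 then 1 else 0

def cyclicDownShift (ℓ : ℕ) : Matrix (Fin ℓ) (Fin ℓ) R :=
  of fun j k => if (j : ℕ) = (k + 1) % ℓ then 1 else 0

theorem downShift_sub_cyclicDownShift (ℓ : ℕ) :
    (downShift ℓ - cyclicDownShift ℓ : Matrix (Fin ℓ) (Fin ℓ) R) =
      vecMulVec (fun j : Fin ℓ => if (j : ℕ) = 0 then -1 else 0)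
        (fun k : Fin ℓ => if (k : ℕ) + 1 = ℓ then 1 else 0) := by
  ext j k
  simp only [downShift, cyclicDownShift, sub_apply, of_apply, vecMulVec_apply]
  rcases Nat.lt_or_ge ((k : ℕ) + 1) ℓ with h | h
  · rw [Nat.mod_eq_of_lt h, if_neg h.ne]
    simp
  · have hk : (k : ℕ) + 1 = ℓ := by omega
    rw [hk, Nat.mod_self, if_neg j.isLt.ne, if_pos rfl]
    split_ifs <;> simp

end Matrix

theorem preconditioned_matrix_rank_perturbation_general
    (n ℓ : ℕ)
    (A₀ A₁ : Matrix (Fin n) (Fin n) ℂ)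
    (N : Matrix (Fin ℓ) (Fin ℓ) ℂ)
    (hN : ∀ j k : Fin ℓ, N j k = if (j : ℕ) = (k : ℕ) + 1 then 1 else 0)
    (Sigma : Matrix (Fin ℓ) (Fin ℓ) ℂ)
    (hSigma : ∀ j k : Fin ℓ, Sigma j k = if (j : ℕ) = ((k : ℕ) + 1) % ℓ then 1 else 0)
    (𝒜 P : Matrix (Fin ℓ × Fin n) (Fin ℓ × Fin n) ℂ)
    (h𝒜 : 𝒜 = (1 : Matrix (Fin ℓ) (Fin ℓ) ℂ) ⊗ₖ A₀ + N ⊗ₖ A₁)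
    (hP : P = (1 : Matrix (Fin ℓ) (Fin ℓ) ℂ) ⊗ₖ A₀ + Sigma ⊗ₖ A₁)
    (hPinv : IsUnit P) :
    (P⁻¹ * 𝒜 - 1).rank ≤ n := by
  have hN : N = downShift ℓ := ext hN
  have hSigma : Sigma = cyclicDownShift ℓ := ext hSigma
  have h𝒜P : 𝒜 - P = (downShift ℓ - cyclicDownShift ℓ) ⊗ₖ A₁ := by
    rw [h𝒜, hP, add_sub_add_left_eq_sub, sub_kronecker, hN, hSigma]
  calc (P⁻¹ * 𝒜 - 1).rank ≤ (𝒜 - P).rank := rank_inv_mul_sub_one_le P 𝒜 hPinv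
    _ ≤ Fintype.card (Fin n) := by
      rw [h𝒜P, downShift_sub_cyclicDownShift]
      exact rank_vecMulVec_kronecker_le _ _ _
    _ = n := Fintype.card_fin n

/-- If the block circulant preconditioner `𝒫` is invertible, the preconditioned
matrix is a rank-at-most-`n` perturbation of the identity:
`rank (𝒫⁻¹ * 𝒜 - 1) ≤ n`. -/
theorem preconditioned_matrix_rank_perturbation
    (n ℓ : ℕ) (hn : 1 ≤ n) (hℓ : 2 ≤ ℓ)
    (A₀ A₁ : Matrix (Fin n) (Fin n) ℂ)
    (N : Matrix (Fin ℓ) (Fin ℓ) ℂ)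
    (hN : ∀ j k : Fin ℓ, N j k = if (j : ℕ) = (k : ℕ) + 1 then 1 else 0)
    (Sigma : Matrix (Fin ℓ) (Fin ℓ) ℂ)
    (hSigma : ∀ j k : Fin ℓ, Sigma j k = if (j : ℕ) = ((k : ℕ) + 1) % ℓ then 1 else 0)
    (𝒜 P : Matrix (Fin ℓ × Fin n) (Fin ℓ × Fin n) ℂ)
    (h𝒜 : 𝒜 = (1 : Matrix (Fin ℓ) (Fin ℓ) ℂ) ⊗ₖ A₀ + N ⊗ₖ A₁)
    (hP : P = (1 : Matrix (Fin ℓ) (Fin ℓ) ℂ) ⊗ₖ A₀ + Sigma ⊗ₖ A₁)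
    (hPinv : IsUnit P) :
    (P⁻¹ * 𝒜 - 1).rank ≤ n :=
  preconditioned_matrix_rank_perturbation_general n ℓ A₀ A₁ N hN Sigma hSigma 𝒜 P h𝒜 hP hPinv
end

section
/- If A ∈ ℂ^{N×N} is invertible and rank(A − I_N) ≤ r, then for every b ∈ ℂ^N the vector A⁻¹ b lies in the Krylov subspace span{b, A b, A² b, …, A^r b}; hence GMRES applied to A x = b terminates with the exact solution in at most r+1 iterations in exact arithmetic. -/
/-! Every `p(A) b` lies in `span {b} ⊔ range (A - 1)`, a space of dimension at most `r + 1`, so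
some nonzero polynomial `p` of degree at most `r + 1` satisfies `p(A) b = 0`. Since `A` is
invertible, factors `X` of `p` can be cancelled, so we may assume `p(0) ≠ 0`; then `p(A) b = 0`
rearranges to `A⁻¹ b = -p(0)⁻¹ (p / X)(A) b`, a combination of `b, A b, …, Aʳ b`. -/

open Matrix Polynomial Module

namespace Matrix

variable {K n : Type*} [Field K] [Fintype n] [DecidableEq n]

def krylovSubspace (A : Matrix n n K) (b : n → K) (k : ℕ) : Submodule K (n → K) :=
  Submodule.span K (Set.range fun i : Fin k => (A ^ (i : ℕ)) *ᵥ b)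

theorem aeval_mulVec_mem_krylovSubspace (A : Matrix n n K) (b : n → K) {k : ℕ} {p : K[X]}
    (hp : p.natDegree < k) : aeval A p *ᵥ b ∈ krylovSubspace A b k := by
  rw [aeval_eq_sum_range, sum_mulVec]
  refine Submodule.sum_mem _ fun i hi => ?_
  rw [smul_mulVec]
  exact Submodule.smul_mem _ _ <| Submodule.subset_span
    ⟨⟨i, (Finset.mem_range_succ_iff.mp hi).trans_lt hp⟩, rfl⟩

theorem aeval_mulVec_mem_span_singleton_sup_range_sub_one (A : Matrix n n K) (b : n → K)
    (p : K[X]) : aeval A p *ᵥ b ∈ (K ∙ b) ⊔ LinearMap.range (A - 1).mulVecLin := by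
  obtain ⟨q, hq⟩ := X_sub_C_dvd_sub_C_eval (a := (1 : K)) (p := p)
  have hp : aeval A p = algebraMap K _ (p.eval 1) + (A - 1) * aeval A q := by
    have := congrArg (aeval A) hq
    simp only [map_sub, map_mul, aeval_C, aeval_X, map_one] at this
    exact sub_eq_iff_eq_add'.mp this
  rw [hp, Algebra.algebraMap_eq_smul_one, add_mulVec, smul_mulVec, one_mulVec, ← mulVec_mulVec]
  exact Submodule.add_mem_sup (Submodule.smul_mem _ _ (Submodule.mem_span_singleton_self b))
    (LinearMap.mem_range_self _ _)

theorem finrank_span_singleton_sup_range_sub_one_le {A : Matrix n n K} {r : ℕ}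
    (hrank : (A - 1).rank ≤ r) (b : n → K) :
    finrank K ↥((K ∙ b) ⊔ LinearMap.range (A - 1).mulVecLin) ≤ r + 1 := by
  have hb : finrank K (K ∙ b) ≤ 1 := by
    simpa using finrank_span_le_card ({b} : Set (n → K))
  have := Submodule.finrank_add_le_finrank_add_finrank (K ∙ b) (LinearMap.range (A - 1).mulVecLin)
  rw [rank] at hrank
  omega

theorem exists_aeval_mulVec_eq_zero_of_rank_sub_one_le {A : Matrix n n K} {r : ℕ}
    (hrank : (A - 1).rank ≤ r) (b : n → K) :
    ∃ p : K[X], p ≠ 0 ∧ p.natDegree ≤ r + 1 ∧ aeval A p *ᵥ b = 0 := by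
  let W := (K ∙ b) ⊔ LinearMap.range (A - 1).mulVecLin
  let f : degreeLT K (r + 2) →ₗ[K] W :=
    { toFun := fun p => ⟨aeval A (p : K[X]) *ᵥ b,
        aeval_mulVec_mem_span_singleton_sup_range_sub_one A b p⟩
      map_add' := fun p q => by ext1; simp [add_mulVec]
      map_smul' := fun c p => by ext1; simp [smul_mulVec] }
  have hlt : finrank K W < finrank K (degreeLT K (r + 2)) := by
    rw [(degreeLTEquiv K (r + 2)).finrank_eq, finrank_fin_fun]
    exact Nat.lt_succ_of_le (finrank_span_singleton_sup_range_sub_one_le hrank b)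
  obtain ⟨⟨p, hpdeg⟩, hpker, hne⟩ :=
    Submodule.exists_mem_ne_zero_of_ne_bot (LinearMap.ker_ne_bot_of_finrank_lt (f := f) hlt)
  have hp0 : p ≠ 0 := fun h => hne (Subtype.ext h)
  refine ⟨p, hp0, ?_, Subtype.ext_iff.mp (LinearMap.mem_ker.mp hpker)⟩
  rw [mem_degreeLT, ← natDegree_lt_iff_degree_lt hp0] at hpdeg
  omega

theorem exists_coeff_zero_ne_zero_of_aeval_mulVec_eq_zero {A : Matrix n n K} (hA : IsUnit A)
    {b : n → K} {p : K[X]} (hp0 : p ≠ 0) (hpb : aeval A p *ᵥ b = 0) :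
    ∃ q : K[X], q.coeff 0 ≠ 0 ∧ q.natDegree ≤ p.natDegree ∧ aeval A q *ᵥ b = 0 := by
  obtain ⟨q, hpq, hq⟩ := exists_eq_pow_rootMultiplicity_mul_and_not_dvd p hp0 0
  generalize p.rootMultiplicity 0 = k at hpq
  rw [C_0, sub_zero] at hpq hq
  refine ⟨q, mt X_dvd_iff.mpr hq, natDegree_le_of_dvd (Dvd.intro_left _ hpq.symm) hp0, ?_⟩
  rw [hpq, map_mul, map_pow, aeval_X, ← mulVec_mulVec] at hpb
  exact mulVec_injective_iff_isUnit.mpr (hA.pow k) (hpb.trans (mulVec_zero _).symm)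

theorem inv_mulVec_mem_krylovSubspace_of_coeff_zero_ne_zero {A : Matrix n n K} (hA : IsUnit A)
    {b : n → K} {k : ℕ} {p : K[X]} (hp0 : p.coeff 0 ≠ 0) (hpdeg : p.natDegree ≤ k + 1)
    (hpb : aeval A p *ᵥ b = 0) : A⁻¹ *ᵥ b ∈ krylovSubspace A b (k + 1) := by
  have : Invertible A := hA.invertible
  have hv : A⁻¹ *ᵥ b = -(p.coeff 0)⁻¹ • aeval A p.divX *ᵥ b := by
    apply inv_mulVec_eq_vec
    rw [← X_mul_divX_add p, map_add, map_mul, aeval_X, aeval_C, Algebra.algebraMap_eq_smul_one,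
      add_mulVec, smul_mulVec, one_mulVec, ← mulVec_mulVec] at hpb
    rw [mulVec_smul, eq_neg_of_add_eq_zero_left hpb, smul_neg, neg_smul, neg_neg, smul_smul,
      inv_mul_cancel₀ hp0, one_smul]
  rw [hv]
  refine Submodule.smul_mem _ _ (aeval_mulVec_mem_krylovSubspace A b ?_)
  rw [natDegree_divX_eq_natDegree_tsub_one]
  omega

end Matrix

/-- If `A` is invertible and `rank (A - 1) ≤ r`, then for every `b` the vector
`A⁻¹ *ᵥ b` lies in the Krylov subspace `span {b, A b, A² b, …, Aʳ b}`; hence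
GMRES terminates with the exact solution in at most `r + 1` iterations. -/
theorem inverse_in_krylov_subspace
    (N r : ℕ)
    (A : Matrix (Fin N) (Fin N) ℂ) (hA : IsUnit A)
    (hrank : (A - 1).rank ≤ r)
    (b : Fin N → ℂ) :
    A⁻¹ *ᵥ b ∈ Submodule.span ℂ
      (Set.range fun i : Fin (r + 1) => (A ^ (i : ℕ)) *ᵥ b) := by
  show A⁻¹ *ᵥ b ∈ krylovSubspace A b (r + 1)
  obtain ⟨p, hp0, hpdeg, hpb⟩ := exists_aeval_mulVec_eq_zero_of_rank_sub_one_le hrank b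
  obtain ⟨q, hq0, hqdeg, hqb⟩ := exists_coeff_zero_ne_zero_of_aeval_mulVec_eq_zero hA hp0 hpb
  exact inv_mulVec_mem_krylovSubspace_of_coeff_zero_ne_zero hA hq0 (hqdeg.trans hpdeg) hqb
end

section
/- If ℛ_BD2 is invertible, then the BD2 preconditioned matrix is a rank-at-most-2n perturbation of the identity: rank(ℛ_BD2⁻¹ · 𝒞_BD2 − I_{nℓ}) ≤ 2n. -/
/-!
`ℛ⁻¹ 𝒞 - I = ℛ⁻¹ (𝒞 - ℛ)`, so it suffices to bound the rank of `𝒞 - ℛ`. The shifts `N` and `Σ`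
differ only in the wrap-around entry of row `0`, hence `N² - Σ² = N (N - Σ) + (N - Σ) Σ` is
supported on rows `0` and `1`. So `𝒞 - ℛ` vanishes outside the first two block rows, which span
`2n` rows.
-/

open Matrix Kronecker

namespace Matrix

variable {m n K : Type*} [Fintype m] [Fintype n] [DecidableEq m] [Field K]

theorem rank_le_card_of_apply_eq_zero (M : Matrix m n K) (s : Finset m)
    (hM : ∀ i ∉ s, ∀ j, M i j = 0) : M.rank ≤ s.card := by
  classical
  have hproj : diagonal (fun i => if i ∈ s then (1 : K) else 0) * M = M := by
    ext i j
    by_cases hi : i ∈ s <;> simp [diagonal_mul, hi, hM]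
  calc M.rank = (diagonal (fun i => if i ∈ s then (1 : K) else 0) * M).rank := by rw [hproj]
    _ ≤ (diagonal (fun i => if i ∈ s then (1 : K) else 0)).rank := rank_mul_le_left _ _
    _ = s.card := by simp [rank_diagonal]

theorem rank_inv_mul_sub_one_le_s19 {A B : Matrix m m K} (hA : IsUnit A) :
    (A⁻¹ * B - 1).rank ≤ (B - A).rank := by
  have hdet : IsUnit A.det := (isUnit_iff_isUnit_det A).mp hA
  rw [← nonsing_inv_mul A hdet, ← mul_sub]
  exact rank_mul_le_right _ _

end Matrix

section Shift

variable {R : Type*} [Ring R] (ℓ : ℕ)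

def downshift : Matrix (Fin ℓ) (Fin ℓ) R :=
  of fun j k => if (j : ℕ) = k + 1 then 1 else 0

def cyclicShift : Matrix (Fin ℓ) (Fin ℓ) R :=
  of fun j k => if (j : ℕ) = (k + 1) % ℓ then 1 else 0

variable {ℓ}

theorem downshift_apply_eq_cyclicShift_apply {i : Fin ℓ} (hi : 1 ≤ (i : ℕ)) (j : Fin ℓ) :
    (downshift ℓ : Matrix _ _ R) i j = cyclicShift ℓ i j := by
  have : (i : ℕ) = j + 1 ↔ (i : ℕ) = (j + 1) % ℓ := by
    rcases Nat.lt_or_ge (j + 1) ℓ with h | h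
    · rw [Nat.mod_eq_of_lt h]
    · rw [show (j : ℕ) + 1 = ℓ by omega, Nat.mod_self]; omega
  simp [downshift, cyclicShift, this]

theorem downshift_mul_apply_eq_zero {D : Matrix (Fin ℓ) (Fin ℓ) R} {i j : Fin ℓ}
    (hD : ∀ k : Fin ℓ, (i : ℕ) = k + 1 → D k j = 0) :
    (downshift ℓ * D : Matrix (Fin ℓ) (Fin ℓ) R) i j = 0 := by
  rw [mul_apply]
  refine Finset.sum_eq_zero fun k _ => ?_
  by_cases hk : (i : ℕ) = k + 1 <;> simp [downshift, hk, hD]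

theorem downshift_sq_apply_eq_cyclicShift_sq_apply {i : Fin ℓ} (hi : 2 ≤ (i : ℕ)) (j : Fin ℓ) :
    (downshift ℓ ^ 2 : Matrix _ _ R) i j = (cyclicShift ℓ ^ 2) i j := by
  set N : Matrix (Fin ℓ) (Fin ℓ) R := downshift ℓ
  set S : Matrix (Fin ℓ) (Fin ℓ) R := cyclicShift ℓ
  have hsq : N ^ 2 - S ^ 2 = N * (N - S) + (N - S) * S := by noncomm_ring
  have hdiff : ∀ {i : Fin ℓ}, 1 ≤ (i : ℕ) → ∀ j, (N - S) i j = 0 := fun hi j => by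
    simp [N, S, Matrix.sub_apply, downshift_apply_eq_cyclicShift_apply hi]
  rw [← sub_eq_zero, ← Matrix.sub_apply, hsq, Matrix.add_apply,
    downshift_mul_apply_eq_zero fun k hk => hdiff (by omega) j, zero_add, mul_apply]
  exact Finset.sum_eq_zero fun k _ => by rw [hdiff (by omega), zero_mul]

end Shift

theorem bd2_preconditioned_matrix_rank_perturbation_general
    (n ℓ : ℕ)
    (A₀ A₁ A₂ : Matrix (Fin n) (Fin n) ℂ)
    (N : Matrix (Fin ℓ) (Fin ℓ) ℂ)
    (hN : ∀ j k : Fin ℓ, N j k = if (j : ℕ) = (k : ℕ) + 1 then 1 else 0)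
    (Sigma : Matrix (Fin ℓ) (Fin ℓ) ℂ)
    (hSigma : ∀ j k : Fin ℓ, Sigma j k = if (j : ℕ) = ((k : ℕ) + 1) % ℓ then 1 else 0)
    (C R : Matrix (Fin ℓ × Fin n) (Fin ℓ × Fin n) ℂ)
    (hC : C = (1 : Matrix (Fin ℓ) (Fin ℓ) ℂ) ⊗ₖ A₀ + N ⊗ₖ A₁ + (N ^ 2) ⊗ₖ A₂)
    (hR : R = (1 : Matrix (Fin ℓ) (Fin ℓ) ℂ) ⊗ₖ A₀ + Sigma ⊗ₖ A₁ + (Sigma ^ 2) ⊗ₖ A₂)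
    (hRinv : IsUnit R) :
    (R⁻¹ * C - 1).rank ≤ 2 * n := by
  obtain rfl : N = downshift ℓ := ext hN
  obtain rfl : Sigma = cyclicShift ℓ := ext hSigma
  have hrows : ∀ r ∉ ({r | (r.1 : ℕ) < 2} : Finset (Fin ℓ × Fin n)), ∀ k, (C - R) r k = 0 := by
    rintro ⟨i, a⟩ hi ⟨j, b⟩
    have hi : 2 ≤ (i : ℕ) := by simp only [Finset.mem_filter_univ, not_lt] at hi; omega
    simp [hC, hR, downshift_apply_eq_cyclicShift_apply (by omega : 1 ≤ (i : ℕ)),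
      downshift_sq_apply_eq_cyclicShift_sq_apply hi]
  have hcard : ({r | (r.1 : ℕ) < 2} : Finset (Fin ℓ × Fin n)).card ≤ 2 * n := by
    have : ({r | (r.1 : ℕ) < 2} : Finset (Fin ℓ × Fin n)) =
        ({i | (i : ℕ) < 2} : Finset (Fin ℓ)) ×ˢ .univ := by
      ext; simp
    rw [this, Finset.card_product, Fin.card_filter_val_lt, Finset.card_univ, Fintype.card_fin]
    exact Nat.mul_le_mul_right _ (min_le_right _ _)
  calc (R⁻¹ * C - 1).rank ≤ (C - R).rank := rank_inv_mul_sub_one_le_s19 hRinv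
    _ ≤ _ := rank_le_card_of_apply_eq_zero _ _ hrows
    _ ≤ 2 * n := hcard

/-- If `ℛ_BD2` is invertible, the BD2 preconditioned matrix is a
rank-at-most-`2n` perturbation of the identity:
`rank (ℛ_BD2⁻¹ * 𝒞_BD2 - 1) ≤ 2n`. -/
theorem bd2_preconditioned_matrix_rank_perturbation
    (n ℓ : ℕ) (hn : 1 ≤ n) (hℓ : 4 ≤ ℓ)
    (A₀ A₁ A₂ : Matrix (Fin n) (Fin n) ℂ)
    (N : Matrix (Fin ℓ) (Fin ℓ) ℂ)
    (hN : ∀ j k : Fin ℓ, N j k = if (j : ℕ) = (k : ℕ) + 1 then 1 else 0)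
    (Sigma : Matrix (Fin ℓ) (Fin ℓ) ℂ)
    (hSigma : ∀ j k : Fin ℓ, Sigma j k = if (j : ℕ) = ((k : ℕ) + 1) % ℓ then 1 else 0)
    (C R : Matrix (Fin ℓ × Fin n) (Fin ℓ × Fin n) ℂ)
    (hC : C = (1 : Matrix (Fin ℓ) (Fin ℓ) ℂ) ⊗ₖ A₀ + N ⊗ₖ A₁ + (N ^ 2) ⊗ₖ A₂)
    (hR : R = (1 : Matrix (Fin ℓ) (Fin ℓ) ℂ) ⊗ₖ A₀ + Sigma ⊗ₖ A₁ + (Sigma ^ 2) ⊗ₖ A₂)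
    (hRinv : IsUnit R) :
    (R⁻¹ * C - 1).rank ≤ 2 * n :=
  bd2_preconditioned_matrix_rank_perturbation_general n ℓ A₀ A₁ A₂ N hN Sigma hSigma C R hC hR hRinv
end
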